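/- arXiv:2402.04148 — 5 statements merged into one kernel-verified Lean document; each statement's English description precedes it below -/
import Mathlib

section
/- Let n ≥ 1 and let w be an element of the hyperoctahedral group B_n. Then the window of w avoids both signed patterns 1 2̄ and 2̄ 1 — that is, there are no indices 1 ≤ i < j ≤ n with w_i > 0 > w_j and w_i < −w_j, and no indices 1 ≤ i < j ≤ n with w_i < 0 < w_j and −w_i > w_j — if and only if the set of negative values among w_1,…,w_n is either empty or equal to {−1,−2,…,−b} for some 1 ≤ b ≤ n. -/
open scoped BigOperators

/-- Membership in the hyperoctahedral group `B_n`, viewed as permutations `w` of `ℤ`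
satisfying `w (-i) = - w i` and fixing everything outside `{-n, …, -1, 1, …, n}`. -/
def IsBn (n : ℕ) (w : Equiv.Perm ℤ) : Prop :=
  (∀ i : ℤ, w (-i) = - w i) ∧ ∀ i : ℤ, (n : ℤ) < |i| → w i = i

/-- The window of `w` avoids the signed pattern `1 2̄`. -/
def Avoids12bar (n : ℕ) (w : Equiv.Perm ℤ) : Prop :=
  ¬ ∃ i j : ℤ, 1 ≤ i ∧ i < j ∧ j ≤ (n : ℤ) ∧ 0 < w i ∧ w j < 0 ∧ w i < -(w j)

/-- The window of `w` avoids the signed pattern `2̄ 1`. -/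
def Avoids2bar1 (n : ℕ) (w : Equiv.Perm ℤ) : Prop :=
  ¬ ∃ i j : ℤ, 1 ≤ i ∧ i < j ∧ j ≤ (n : ℤ) ∧ w i < 0 ∧ 0 < w j ∧ w j < -(w i)

/-- The window of `w` avoids the signed pattern `2̄ 1̄`. -/
def Avoids2bar1bar (n : ℕ) (w : Equiv.Perm ℤ) : Prop :=
  ¬ ∃ i j : ℤ, 1 ≤ i ∧ i < j ∧ j ≤ (n : ℤ) ∧ w i < w j ∧ w j < 0

/-- The window of `w` avoids the signed pattern `3 1 2`. -/
def Avoids312s (n : ℕ) (w : Equiv.Perm ℤ) : Prop :=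
  ¬ ∃ i j k : ℤ, 1 ≤ i ∧ i < j ∧ j < k ∧ k ≤ (n : ℤ) ∧ 0 < w j ∧ w j < w k ∧ w k < w i

/-- The window of `w` avoids the signed pattern `3 1̄ 2`. -/
def Avoids31bar2 (n : ℕ) (w : Equiv.Perm ℤ) : Prop :=
  ¬ ∃ i j k : ℤ, 1 ≤ i ∧ i < j ∧ j < k ∧ k ≤ (n : ℤ) ∧
    w j < 0 ∧ 0 < w k ∧ w k < w i ∧ -(w j) < w k

/-- The window of `w` avoids the five signed patterns `1 2̄`, `2̄ 1`, `2̄ 1̄`, `3 1 2`, `3 1̄ 2`. -/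
def AvoidsFive (n : ℕ) (w : Equiv.Perm ℤ) : Prop :=
  Avoids12bar n w ∧ Avoids2bar1 n w ∧ Avoids2bar1bar n w ∧ Avoids312s n w ∧ Avoids31bar2 n w

/-- The long one-line notation `(w(-n), …, w(-1), w(1), …, w(n))` avoids the pattern `3412`. -/
def LongAvoids3412 (n : ℕ) (w : Equiv.Perm ℤ) : Prop :=
  ¬ ∃ i1 i2 i3 i4 : ℤ, -(n : ℤ) ≤ i1 ∧ i1 < i2 ∧ i2 < i3 ∧ i3 < i4 ∧ i4 ≤ (n : ℤ) ∧
    i1 ≠ 0 ∧ i2 ≠ 0 ∧ i3 ≠ 0 ∧ i4 ≠ 0 ∧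
    w i3 < w i4 ∧ w i4 < w i1 ∧ w i1 < w i2

/-- The long one-line notation `(w(-n), …, w(-1), w(1), …, w(n))` avoids the pattern `4231`. -/
def LongAvoids4231 (n : ℕ) (w : Equiv.Perm ℤ) : Prop :=
  ¬ ∃ i1 i2 i3 i4 : ℤ, -(n : ℤ) ≤ i1 ∧ i1 < i2 ∧ i2 < i3 ∧ i3 < i4 ∧ i4 ≤ (n : ℤ) ∧
    i1 ≠ 0 ∧ i2 ≠ 0 ∧ i3 ≠ 0 ∧ i4 ≠ 0 ∧
    w i4 < w i2 ∧ w i2 < w i3 ∧ w i3 < w i1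

/-- For `w ∈ B_n`, the window of `w` avoids the signed patterns `1 2̄` and
`2̄ 1` if and only if the set of negative values among `w_1, …, w_n` is empty or equals
`{-b, …, -1}` for some `1 ≤ b ≤ n`. -/
theorem stmt_0 (n : ℕ) (hn : 1 ≤ n) (w : Equiv.Perm ℤ) (hw : IsBn n w) :
    (Avoids12bar n w ∧ Avoids2bar1 n w) ↔
      ({x : ℤ | x < 0 ∧ ∃ i : ℤ, 1 ≤ i ∧ i ≤ (n : ℤ) ∧ w i = x} = ∅ ∨
        ∃ b : ℤ, 1 ≤ b ∧ b ≤ (n : ℤ) ∧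
          {x : ℤ | x < 0 ∧ ∃ i : ℤ, 1 ≤ i ∧ i ≤ (n : ℤ) ∧ w i = x} = Set.Icc (-b) (-1)) := by
  classical
  obtain ⟨hsym, hfix⟩ := hw
  have h0 : w 0 = 0 := by
    have h := hsym 0
    rw [neg_zero] at h
    linarith
  have hbd : ∀ i : ℤ, |i| ≤ (n : ℤ) → |w i| ≤ (n : ℤ) := by
    intro i hi
    by_contra h
    push_neg at h
    have h2 : w (w i) = w i := hfix (w i) h
    have h3 : w i = i := w.injective h2
    rw [h3] at h
    exact absurd hi h.not_ge
  have hne : ∀ i : ℤ, i ≠ 0 → w i ≠ 0 := by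
    intro i hi h
    exact hi (w.injective (h.trans h0.symm))
  have hwin : ∀ i : ℤ, 1 ≤ i → i ≤ (n : ℤ) → (-(n : ℤ) ≤ w i ∧ w i ≤ (n : ℤ) ∧ w i ≠ 0) := by
    intro i h1 h2
    have hb := hbd i (by rw [abs_le]; omega)
    rw [abs_le] at hb
    exact ⟨hb.1, hb.2, hne i (by omega)⟩
  have hkey : ∀ y : ℤ, -(n : ℤ) ≤ y → y ≤ -1 →
      (∃ i : ℤ, 1 ≤ i ∧ i ≤ (n : ℤ) ∧ w i = y) ∨
      (∃ i : ℤ, 1 ≤ i ∧ i ≤ (n : ℤ) ∧ w i = -y) := by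
    intro y hy1 hy2
    set k := w.symm y with hk
    have hwk : w k = y := w.apply_symm_apply y
    have hkb : |k| ≤ (n : ℤ) := by
      by_contra h
      push_neg at h
      have h2 : w k = k := hfix k h
      have : k = y := by rw [← hwk, h2]
      rw [this] at h
      have : |y| ≤ (n : ℤ) := abs_le.mpr ⟨hy1, by omega⟩
      linarith
    rw [abs_le] at hkb
    have hk0 : k ≠ 0 := by
      intro h
      rw [h, h0] at hwk
      omega
    rcases le_or_gt 1 k with hk1 | hk1
    · exact Or.inl ⟨k, hk1, hkb.2, hwk⟩
    · refine Or.inr ⟨-k, by omega, by omega, ?_⟩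
      rw [hsym k, hwk]
  constructor
  · rintro ⟨h12, h21⟩
    by_cases hN : {x : ℤ | x < 0 ∧ ∃ i : ℤ, 1 ≤ i ∧ i ≤ (n : ℤ) ∧ w i = x} = ∅
    · exact Or.inl hN
    · right
      obtain ⟨x0, hx0⟩ := Set.nonempty_iff_ne_empty.mpr hN
      obtain ⟨m, hmP, hmle⟩ := Int.exists_least_of_bdd
        (P := fun x => x ∈ {x : ℤ | x < 0 ∧ ∃ i : ℤ, 1 ≤ i ∧ i ≤ (n : ℤ) ∧ w i = x})
        ⟨-(n : ℤ), by
          rintro z ⟨hz, i, hi1, hi2, hie⟩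
          have := hwin i hi1 hi2
          omega⟩ ⟨x0, hx0⟩
      obtain ⟨hm0, j, hj1, hj2, hje⟩ := hmP
      have hmn : -(n : ℤ) ≤ m := by have := hwin j hj1 hj2; omega
      refine ⟨-m, by omega, by omega, ?_⟩
      rw [neg_neg]
      ext x
      simp only [Set.mem_setOf_eq, Set.mem_Icc]
      constructor
      · rintro ⟨hx0', hx⟩
        exact ⟨hmle x ⟨hx0', hx⟩, by omega⟩
      · rintro ⟨hx1, hx2⟩
        rcases eq_or_lt_of_le hx1 with heq | hlt
        · exact heq ▸ ⟨hm0, j, hj1, hj2, hje⟩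
        · rcases hkey x (by omega) hx2 with ⟨i, hi1, hi2, hie⟩ | ⟨i, hi1, hi2, hie⟩
          · exact ⟨by omega, i, hi1, hi2, hie⟩
          · exfalso
            rcases lt_trichotomy i j with hij | hij | hij
            · exact h12 ⟨i, j, hi1, hij, hj2, by omega, by omega, by omega⟩
            · rw [hij, hje] at hie; omega
            · exact h21 ⟨j, i, hj1, hij, hi2, by omega, by omega, by omega⟩
  · rintro (hN | ⟨b, hb1, hb2, hN⟩)
    · constructor
      · rintro ⟨i, j, hi1, hij, hj2, hwi, hwj, hlt⟩
        have : w j ∈ {x : ℤ | x < 0 ∧ ∃ i : ℤ, 1 ≤ i ∧ i ≤ (n : ℤ) ∧ w i = x} :=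
          ⟨hwj, j, by omega, hj2, rfl⟩
        rw [hN] at this
        exact this
      · rintro ⟨i, j, hi1, hij, hj2, hwi, hwj, hlt⟩
        have : w i ∈ {x : ℤ | x < 0 ∧ ∃ i : ℤ, 1 ≤ i ∧ i ≤ (n : ℤ) ∧ w i = x} :=
          ⟨hwi, i, hi1, by omega, rfl⟩
        rw [hN] at this
        exact this
    · constructor
      · rintro ⟨i, j, hi1, hij, hj2, hwi, hwj, hlt⟩
        have hj : w j ∈ {x : ℤ | x < 0 ∧ ∃ i : ℤ, 1 ≤ i ∧ i ≤ (n : ℤ) ∧ w i = x} :=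
          ⟨hwj, j, by omega, hj2, rfl⟩
        rw [hN] at hj
        rw [Set.mem_Icc] at hj
        have hmem : -(w i) ∈ Set.Icc (-b) (-1 : ℤ) := by
          rw [Set.mem_Icc]; omega
        rw [← hN] at hmem
        obtain ⟨_, k, hk1, hk2, hke⟩ := hmem
        have : w k = w (-i) := by rw [hke, hsym]
        have := w.injective this
        omega
      · rintro ⟨i, j, hi1, hij, hj2, hwi, hwj, hlt⟩
        have hi : w i ∈ {x : ℤ | x < 0 ∧ ∃ i : ℤ, 1 ≤ i ∧ i ≤ (n : ℤ) ∧ w i = x} :=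
          ⟨hwi, i, hi1, by omega, rfl⟩
        rw [hN] at hi
        rw [Set.mem_Icc] at hi
        have hmem : -(w j) ∈ Set.Icc (-b) (-1 : ℤ) := by
          rw [Set.mem_Icc]; omega
        rw [← hN] at hmem
        obtain ⟨_, k, hk1, hk2, hke⟩ := hmem
        have : w k = w (-j) := by rw [hke, hsym]
        have := w.injective this
        omega
end

section
/- Let n ≥ 1 and let w ∈ B_n be such that the window of w avoids the five signed patterns 1 2̄, 2̄ 1, 2̄ 1̄, 3 1 2, 3 1̄ 2. Then the long one-line notation of w avoids the patterns 3412 and 4231. -/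
open scoped BigOperators

/-- If the window of `w ∈ B_n` avoids the five signed patterns
`1 2̄`, `2̄ 1`, `2̄ 1̄`, `3 1 2`, `3 1̄ 2`, then the long one-line notation of `w`
avoids the patterns `3412` and `4231`. -/
theorem stmt_1 (n : ℕ) (hn : 1 ≤ n) (w : Equiv.Perm ℤ) (hw : IsBn n w)
    (h5 : AvoidsFive n w) :
    LongAvoids3412 n w ∧ LongAvoids4231 n w := by
  obtain ⟨hsym, hfix⟩ := hw
  obtain ⟨h12, h21, h22, h312, h31b2⟩ := h5
  have h0 : w 0 = 0 := by
    have h := hsym 0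
    simp only [neg_zero] at h
    linarith
  have hne0 : ∀ i : ℤ, i ≠ 0 → w i ≠ 0 := by
    intro i hi hwi
    exact hi (w.injective (hwi.trans h0.symm))
  -- L2 : every positive window value exceeds the absolute value of every negative one
  have L2 : ∀ i j : ℤ, 1 ≤ i → i ≤ (n : ℤ) → 1 ≤ j → j ≤ (n : ℤ) →
      w i < 0 → 0 < w j → -(w i) < w j := by
    intro i j hi1 hin hj1 hjn hwi hwj
    by_contra hle
    push_neg at hle
    have hne : w j ≠ -(w i) := by
      intro he
      have h1 : w j = w (-i) := by rw [he, hsym i]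
      have := w.injective h1
      omega
    have hlt : w j < -(w i) := lt_of_le_of_ne hle hne
    rcases lt_trichotomy i j with h | h | h
    · exact h21 ⟨i, j, hi1, h, hjn, hwi, hwj, hlt⟩
    · subst h; linarith
    · exact h12 ⟨j, i, hj1, h, hin, hwj, hwi, hlt⟩
  -- L1 : the window avoids the (unsigned) pattern 312
  have L1 : ∀ i j k : ℤ, 1 ≤ i → i < j → j < k → k ≤ (n : ℤ) →
      w j < w k → w k < w i → False := by
    intro i j k hi hij hjk hkn h1 h2
    rcases lt_trichotomy (w k) 0 with hk | hk | hk
    · exact h22 ⟨j, k, by omega, hjk, hkn, h1, hk⟩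
    · exact hne0 k (by omega) hk
    · rcases lt_trichotomy (w j) 0 with hj | hj | hj
      · have := L2 j k (by omega) (by omega) (by omega) hkn hj hk
        exact h31b2 ⟨i, j, k, hi, hij, hjk, hkn, hj, hk, h2, this⟩
      · exact hne0 j (by omega) hj
      · exact h312 ⟨i, j, k, hi, hij, hjk, hkn, hj, h1, h2⟩
  -- M1 : no 3412 occurrence with the third index positive
  have M1 : ∀ i1 i3 i4 : ℤ, -(n : ℤ) ≤ i1 → i1 < i3 → i3 < i4 → i4 ≤ (n : ℤ) →
      0 < i3 → i1 ≠ 0 → w i3 < w i4 → w i4 < w i1 → False := by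
    intro i1 i3 i4 hb h13 h34 h4n h3 hne hA hB
    rcases lt_trichotomy i1 0 with hi1 | hi1 | hi1
    · have hw1 : w i1 = -(w (-i1)) := by
        have := hsym (-i1); rw [neg_neg] at this; linarith
      rcases lt_trichotomy (w i4) 0 with h4 | h4 | h4
      · exact h22 ⟨i3, i4, by omega, h34, h4n, hA, h4⟩
      · exact hne0 i4 (by omega) h4
      · have hwp : w (-i1) < 0 := by linarith
        have := L2 (-i1) i4 (by omega) (by omega) (by omega) h4n hwp h4
        linarith
    · exact hne hi1
    · exact L1 i1 i3 i4 (by omega) h13 h34 h4n hA hB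
  -- M2 : no 4231 occurrence with the third index positive
  have M2 : ∀ i1 i2 i3 i4 : ℤ, -(n : ℤ) ≤ i1 → i1 < i2 → i2 < i3 → i3 < i4 →
      i4 ≤ (n : ℤ) → 0 < i3 → i1 ≠ 0 → i2 ≠ 0 →
      w i4 < w i2 → w i2 < w i3 → w i3 < w i1 → False := by
    intro i1 i2 i3 i4 hb h12' h23 h34 h4n h3 hne1 hne2 hA hB hC
    rcases lt_trichotomy i1 0 with hi1 | hi1 | hi1
    · have hw1 : w i1 = -(w (-i1)) := by
        have := hsym (-i1); rw [neg_neg] at this; linarith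
      rcases lt_trichotomy (w i3) 0 with h3s | h3s | h3s
      · rcases lt_trichotomy i2 0 with hi2 | hi2 | hi2
        · have hw2 : w i2 = -(w (-i2)) := by
            have := hsym (-i2); rw [neg_neg] at this; linarith
          have hq : 0 < w (-i2) := by linarith
          have h4s : w i4 < 0 := by linarith
          have := L2 i4 (-i2) (by omega) h4n (by omega) (by omega) h4s hq
          linarith
        · exact hne2 hi2
        · exact h22 ⟨i2, i3, by omega, h23, by omega, hB, h3s⟩
      · exact hne0 i3 (by omega) h3s
      · have hp : w (-i1) < 0 := by linarith
        have := L2 (-i1) i3 (by omega) (by omega) (by omega) (by omega) hp h3s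
        linarith
    · exact hne1 hi1
    · exact L1 i1 i2 i3 (by omega) h12' h23 (by omega) hB hC
  constructor
  · rintro ⟨i1, i2, i3, i4, hb, h12', h23, h34, h4n, hn1, hn2, hn3, hn4, hA, hB, hC⟩
    rcases lt_trichotomy i3 0 with h | h | h
    · have e1 := hsym i1
      have e2 := hsym i2
      have e4 := hsym i4
      exact M1 (-i4) (-i2) (-i1) (by omega) (by omega) (by omega) (by omega)
        (by omega) (by omega) (by rw [e2, e1]; linarith) (by rw [e1, e4]; linarith)
    · exact hn3 h
    · exact M1 i1 i3 i4 hb (by omega) h34 h4n h hn1 hA hB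
  · rintro ⟨i1, i2, i3, i4, hb, h12', h23, h34, h4n, hn1, hn2, hn3, hn4, hA, hB, hC⟩
    rcases lt_trichotomy i3 0 with h | h | h
    · have e1 := hsym i1
      have e2 := hsym i2
      have e3 := hsym i3
      have e4 := hsym i4
      exact M2 (-i4) (-i3) (-i2) (-i1) (by omega) (by omega) (by omega) (by omega)
        (by omega) (by omega) (by omega) (by omega)
        (by rw [e1, e3]; linarith) (by rw [e3, e2]; linarith) (by rw [e2, e4]; linarith)
    · exact hn3 h
    · exact M2 i1 i2 i3 i4 hb h12' h23 h34 h4n h hn1 hn2 hA hB hC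
end

section
/- Let n, t ≥ 1 and for 1 ≤ m ≤ t let I_m = {a_m, a_m + 1, …, b_m} ∖ {0}, where a_m, b_m are nonzero integers with −n ≤ a_m ≤ b_m ≤ n and either 1 ≤ a_m or a_m = −b_m. Assume: (i) the sets I_1,…,I_t are pairwise distinct; (ii) no I_i is a proper subset of another I_j; (iii) for all i < j < k, if I_i ∩ I_j ≠ ∅ and I_j ∩ I_k ≠ ∅ then either a_i < a_j < a_k or a_i > a_j > a_k. Then at most one index j satisfies a_j < 0 (equivalently, at most one of the intervals is symmetric about 0); moreover, for such an index j there do not exist indices i < j and k > j with both I_i ∩ I_j ≠ ∅ and I_j ∩ I_k ≠ ∅. -/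
/-- In a factorization of a type-BC zig-zag network, at most one interval
is symmetric about 0, and such an interval is maximal or minimal in the partial order on
the intervals. -/
theorem stmt_3 (n t : ℕ) (hn : 1 ≤ n) (ht : 1 ≤ t) (a b : Fin t → ℤ)
    (I : Fin t → Set ℤ)
    (hI : ∀ m, I m = {x : ℤ | a m ≤ x ∧ x ≤ b m ∧ x ≠ 0})
    (hab : ∀ m, a m ≠ 0 ∧ b m ≠ 0 ∧ -(n : ℤ) ≤ a m ∧ a m ≤ b m ∧ b m ≤ (n : ℤ) ∧
      (1 ≤ a m ∨ a m = -(b m)))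
    (hdist : ∀ i j, I i = I j → i = j)
    (hnonnest : ∀ i j, ¬ I i ⊂ I j)
    (hzig : ∀ i j k : Fin t, i < j → j < k →
      (I i ∩ I j).Nonempty → (I j ∩ I k).Nonempty →
      ((a i < a j ∧ a j < a k) ∨ (a k < a j ∧ a j < a i))) :
    (∀ j j' : Fin t, a j < 0 → a j' < 0 → j = j') ∧
      ∀ j : Fin t, a j < 0 →
        ¬ ∃ i k : Fin t, i < j ∧ j < k ∧ (I i ∩ I j).Nonempty ∧ (I j ∩ I k).Nonempty := by
  have hsym : ∀ m : Fin t, a m < 0 → a m = -(b m) ∧ 1 ≤ b m := by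
    intro m hm
    obtain ⟨ha0, hb0, _, hab', _, hor⟩ := hab m
    rcases hor with h | h
    · omega
    · exact ⟨h, by omega⟩
  have key : ∀ j j' : Fin t, a j < 0 → a j' < 0 → b j < b j' → False := by
    intro j j' hj hj' hbb
    obtain ⟨he, hb1⟩ := hsym j hj
    obtain ⟨he', hb1'⟩ := hsym j' hj'
    apply hnonnest j j'
    rw [Set.ssubset_def]
    constructor
    · intro x hx
      rw [hI j] at hx; rw [hI j']
      simp only [Set.mem_setOf_eq] at *
      omega
    · intro hsub
      have : b j' ∈ I j := hsub (by rw [hI j']; simp only [Set.mem_setOf_eq]; omega)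
      rw [hI j] at this; simp only [Set.mem_setOf_eq] at this; omega
  constructor
  · intro j j' hj hj'
    by_contra hne
    rcases lt_trichotomy (b j) (b j') with h | h | h
    · exact key j j' hj hj' h
    · apply hne; apply hdist
      rw [hI j, hI j']
      obtain ⟨he, _⟩ := hsym j hj
      obtain ⟨he', _⟩ := hsym j' hj'
      ext x; simp only [Set.mem_setOf_eq]; omega
    · exact key j' j hj' hj h
  · rintro j hj ⟨i, k, hij, hjk, hIij, hIjk⟩
    obtain ⟨hej, _⟩ := hsym j hj
    rcases hzig i j k hij hjk hIij hIjk with ⟨h1, h2⟩ | ⟨h1, h2⟩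
    · have hi : a i < 0 := by omega
      obtain ⟨hei, _⟩ := hsym i hi
      exact key j i hj hi (by omega)
    · have hk : a k < 0 := by omega
      obtain ⟨hek, _⟩ := hsym k hk
      exact key j k hj hk (by omega)
end

section
/- Let w ∈ B_n have window avoiding the five signed patterns 1 2̄, 2̄ 1, 2̄ 1̄, 3 1 2, 3 1̄ 2, let p = #{j : w_j < 0}, and for 1 ≤ j ≤ n let m_j = max({p} ∪ {w_1,…,w_j}), the maximum taken in ℤ. Define a_i = −i for 1 ≤ i ≤ p and a_i = i for p < i ≤ n. Then for every j ∈ {1,…,n}, w_j = max({a_1, a_2, …, a_{m_j}} ∖ {w_1,…,w_{j−1}}). (In particular, w is recovered from the partial order Q(w) together with its grounded set; that is, Algorithm qtow inverts Algorithm wtoq.) -/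
open scoped BigOperators

/-- `p`, the number of negative letters in the window `(w 1, …, w n)`. -/
noncomputable def negCount (n : ℕ) (w : Equiv.Perm ℤ) : ℕ :=
  ((Finset.Icc (1 : ℤ) (n : ℤ)).filter (fun i => w i < 0)).card

/-- `m_j = max ({p} ∪ {w 1, …, w j})`. -/
noncomputable def mval (n : ℕ) (w : Equiv.Perm ℤ) (j : ℤ) : ℤ :=
  (insert ((negCount n w : ℤ)) ((Finset.Icc (1 : ℤ) j).image (fun i => w i))).max'
    (Finset.insert_nonempty _ _)

/-- The strict order `Q(w)` on `{1, …, n}`: `j <_{Q(w)} i` iff `i > m_j`. -/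
def qlt (n : ℕ) (w : Equiv.Perm ℤ) (j i : ℤ) : Prop := mval n w j < i

/-- `i` and `j` are incomparable in `Q(w)`. -/
def QIncomp (n : ℕ) (w : Equiv.Perm ℤ) (i j : ℤ) : Prop :=
  i ≠ j ∧ ¬ qlt n w i j ∧ ¬ qlt n w j i

/-- The word `a_1 ⋯ a_n = 1̄ ⋯ p̄ (p+1) ⋯ n` from Algorithm qtow:
`a_i = -i` for `i ≤ p` and `a_i = i` otherwise. -/
def aFun (p : ℕ) (i : ℤ) : ℤ := if i ≤ (p : ℤ) then -i else i

/-!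
Avoiding `1 2̄` and `2̄ 1` forces every positive window entry to exceed the absolute value of
every negative one; since `k ↦ |w k|` permutes `{1, …, n}`, the negative entries are
`-1, …, -p` and the positive ones `p+1, …, n`, so every `w j` is a letter `a_i` with `i ≤ m_j`.
A negative candidate `-i > w j` still unused at step `j` would occur after position `j`,
giving a `2̄ 1̄`. A positive candidate `i` with `w j < i ≤ m_j` still unused at step `j` would
give `m_j = w l` for some `l < j` and `i = w k` for some `k > j`, and then `l < j < k` is an
occurrence of `3 1 2` or of `3 1̄ 2`.
-/

namespace IsBn

variable {n : ℕ} {w : Equiv.Perm ℤ}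

lemma map_zero (hw : IsBn n w) : w 0 = 0 := by
  have h := hw.1 0
  rw [neg_zero] at h
  omega

lemma apply_ne_zero (hw : IsBn n w) {i : ℤ} (hi : i ≠ 0) : w i ≠ 0 :=
  hw.map_zero ▸ w.injective.ne hi

lemma abs_apply_le (hw : IsBn n w) {i : ℤ} (hi : |i| ≤ n) : |w i| ≤ n := by
  by_contra! h
  have hfix : w i = i := w.injective (hw.2 _ h)
  exact (hfix ▸ h).not_ge hi

lemma exists_apply_eq_or_eq_neg (hw : IsBn n w) {t : ℤ} (ht : 1 ≤ t) (htn : t ≤ n) :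
    ∃ s : ℤ, 1 ≤ s ∧ s ≤ n ∧ (w s = t ∨ w s = -t) := by
  have hws : w (w.symm t) = t := w.apply_symm_apply t
  have hs : |w.symm t| ≤ n := by
    by_contra! h
    have := hw.2 _ h
    rw [hws] at this
    rw [← this, abs_of_pos (by omega)] at h
    omega
  rw [abs_le] at hs
  rcases lt_trichotomy (w.symm t) 0 with hneg | hzero | hpos
  · exact ⟨-w.symm t, by omega, by omega, Or.inr (by rw [hw.1, hws])⟩
  · rw [hzero, hw.map_zero] at hws
    omega
  · exact ⟨w.symm t, by omega, hs.2, Or.inl hws⟩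

end IsBn

section SignedPatterns

variable {n : ℕ} {w : Equiv.Perm ℤ}

lemma negCount_le (n : ℕ) (w : Equiv.Perm ℤ) : (negCount n w : ℤ) ≤ n := by
  have h := Finset.card_filter_le (Finset.Icc (1 : ℤ) n) (fun i => w i < 0)
  rw [Int.card_Icc] at h
  unfold negCount
  omega

lemma negCount_eq_card_image (n : ℕ) (w : Equiv.Perm ℤ) :
    negCount n w = (((Finset.Icc (1 : ℤ) n).filter (fun i => w i < 0)).image (fun i => -w i)).card :=
  (Finset.card_image_of_injective _ (neg_injective.comp w.injective)).symm

lemma neg_apply_lt_apply (hw : IsBn n w) (h12 : Avoids12bar n w) (h21 : Avoids2bar1 n w)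
    {i j : ℤ} (hi : 1 ≤ i) (hin : i ≤ n) (hj : 1 ≤ j) (hjn : j ≤ n)
    (hpos : 0 < w i) (hneg : w j < 0) : -w j < w i := by
  have hne : -w j ≠ w i := by
    rw [← hw.1]
    exact w.injective.ne (by omega)
  rcases lt_trichotomy i j with hij | rfl | hji
  · exact lt_of_le_of_ne (not_lt.mp fun h => h12 ⟨i, j, hi, hij, hjn, hpos, hneg, h⟩) hne
  · omega
  · exact lt_of_le_of_ne (not_lt.mp fun h => h21 ⟨j, i, hj, hji, hin, hneg, hpos, h⟩) hne

lemma negCount_lt_apply (hw : IsBn n w) (h12 : Avoids12bar n w) (h21 : Avoids2bar1 n w)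
    {i : ℤ} (hi : 1 ≤ i) (hin : i ≤ n) (hpos : 0 < w i) : (negCount n w : ℤ) < w i := by
  have hsub : ((Finset.Icc (1 : ℤ) n).filter (fun j => w j < 0)).image (fun j => -w j) ⊆
      Finset.Icc 1 (w i - 1) := by
    intro t ht
    obtain ⟨j, hj, rfl⟩ := Finset.mem_image.mp ht
    rw [Finset.mem_filter, Finset.mem_Icc] at hj
    have := neg_apply_lt_apply hw h12 h21 hi hin hj.1.1 hj.1.2 hpos hj.2
    rw [Finset.mem_Icc]
    omega
  have h := Finset.card_le_card hsub
  rw [← negCount_eq_card_image, Int.card_Icc] at h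
  omega

lemma neg_apply_le_negCount (hw : IsBn n w) (h12 : Avoids12bar n w) (h21 : Avoids2bar1 n w)
    {j : ℤ} (hj : 1 ≤ j) (hjn : j ≤ n) (hneg : w j < 0) : -w j ≤ negCount n w := by
  have hsub : Finset.Icc 1 (-w j) ⊆
      ((Finset.Icc (1 : ℤ) n).filter (fun i => w i < 0)).image (fun i => -w i) := by
    intro t ht
    rw [Finset.mem_Icc] at ht
    have hjabs := hw.abs_apply_le (i := j) (by rw [abs_of_pos (by omega)]; exact hjn)
    rw [abs_of_neg hneg] at hjabs
    obtain ⟨s, hs, hsn, hws | hws⟩ := hw.exists_apply_eq_or_eq_neg ht.1 (by omega)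
    · have := neg_apply_lt_apply hw h12 h21 hs hsn hj hjn (by omega) hneg
      omega
    · exact Finset.mem_image.mpr
        ⟨s, Finset.mem_filter.mpr ⟨Finset.mem_Icc.mpr ⟨hs, hsn⟩, by omega⟩, by omega⟩
  have h := Finset.card_le_card hsub
  rw [← negCount_eq_card_image, Int.card_Icc] at h
  omega

lemma negCount_le_mval (j : ℤ) : (negCount n w : ℤ) ≤ mval n w j :=
  Finset.le_max' _ _ (Finset.mem_insert_self _ _)

lemma apply_le_mval {i j : ℤ} (hi : 1 ≤ i) (hij : i ≤ j) : w i ≤ mval n w j :=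
  Finset.le_max' _ _ (Finset.mem_insert_of_mem
    (Finset.mem_image_of_mem _ (Finset.mem_Icc.mpr ⟨hi, hij⟩)))

lemma mval_eq_negCount_or_exists (n : ℕ) (w : Equiv.Perm ℤ) (j : ℤ) :
    mval n w j = negCount n w ∨ ∃ i, 1 ≤ i ∧ i ≤ j ∧ w i = mval n w j := by
  rcases Finset.mem_insert.mp (Finset.max'_mem
    (insert (negCount n w : ℤ) ((Finset.Icc 1 j).image fun i => w i))
    (Finset.insert_nonempty _ _)) with h | h
  · exact Or.inl h
  · obtain ⟨i, hi, hwi⟩ := Finset.mem_image.mp h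
    rw [Finset.mem_Icc] at hi
    exact Or.inr ⟨i, hi.1, hi.2, hwi⟩

lemma aFun_of_le {p : ℕ} {i : ℤ} (h : i ≤ p) : aFun p i = -i := if_pos h

lemma aFun_of_lt {p : ℕ} {i : ℤ} (h : (p : ℤ) < i) : aFun p i = i := if_neg h.not_ge

/-- The set `{a_1, …, a_{m_j}} \ {w_1, …, w_{j-1}}` from which Algorithm qtow picks `w j`. -/
def qtowCandidates (n : ℕ) (w : Equiv.Perm ℤ) (j : ℤ) : Set ℤ :=
  {x : ℤ | (∃ i : ℤ, 1 ≤ i ∧ i ≤ mval n w j ∧ aFun (negCount n w) i = x) ∧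
    ¬ ∃ i : ℤ, 1 ≤ i ∧ i < j ∧ w i = x}

lemma apply_mem_qtowCandidates (hw : IsBn n w) (h12 : Avoids12bar n w) (h21 : Avoids2bar1 n w)
    {j : ℤ} (hj : 1 ≤ j) (hjn : j ≤ n) : w j ∈ qtowCandidates n w j := by
  refine ⟨?_, fun ⟨k, _, hkj, hwk⟩ => (w.injective hwk ▸ hkj).false⟩
  rcases (hw.apply_ne_zero (i := j) (by omega)).lt_or_gt with hneg | hpos
  · have hle := neg_apply_le_negCount hw h12 h21 hj hjn hneg
    exact ⟨-w j, by omega, hle.trans (negCount_le_mval j), by rw [aFun_of_le hle, neg_neg]⟩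
  · have hlt := negCount_lt_apply hw h12 h21 hj hjn hpos
    exact ⟨w j, by omega, apply_le_mval hj le_rfl, aFun_of_lt hlt⟩

lemma neg_le_apply_of_fresh (hw : IsBn n w) (h12 : Avoids12bar n w) (h21 : Avoids2bar1 n w)
    (h2b1b : Avoids2bar1bar n w) {i j : ℤ} (hj : 1 ≤ j) (hi : 1 ≤ i) (hip : i ≤ negCount n w)
    (hfresh : ¬ ∃ k, 1 ≤ k ∧ k < j ∧ w k = -i) : -i ≤ w j := by
  by_contra! hlt
  obtain ⟨k, hk, hkn, hwk | hwk⟩ :=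
    hw.exists_apply_eq_or_eq_neg hi (hip.trans (negCount_le n w))
  · have := negCount_lt_apply hw h12 h21 hk hkn (by omega)
    omega
  · rcases lt_trichotomy k j with hkj | rfl | hjk
    · exact hfresh ⟨k, hk, hkj, hwk⟩
    · omega
    · exact h2b1b ⟨j, k, hj, hjk, hkn, by omega, by omega⟩

lemma le_apply_of_fresh (hw : IsBn n w) (h5 : AvoidsFive n w) {i j : ℤ} (hj : 1 ≤ j)
    (hjn : j ≤ n) (hpi : (negCount n w : ℤ) < i) (him : i ≤ mval n w j)
    (hfresh : ¬ ∃ k, 1 ≤ k ∧ k < j ∧ w k = i) : i ≤ w j := by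
  obtain ⟨h12, h21, -, h312, h31b2⟩ := h5
  by_contra! hlt
  obtain ⟨l, hl, hlj, hwl⟩ := (mval_eq_negCount_or_exists n w j).resolve_left (by omega)
  have hlj : l < j := lt_of_le_of_ne hlj (by rintro rfl; omega)
  have hin : i ≤ n := by
    have := hw.abs_apply_le (i := l) (by rw [abs_of_pos (by omega)]; omega)
    have := le_abs_self (w l)
    omega
  obtain ⟨k, hk, hkn, hwk | hwk⟩ := hw.exists_apply_eq_or_eq_neg (by omega) hin
  · have hjk : j < k := by
      rcases lt_trichotomy k j with hkj | rfl | hjk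
      · exact (hfresh ⟨k, hk, hkj, hwk⟩).elim
      · omega
      · exact hjk
    have hkl : w k < w l := lt_of_le_of_ne (by omega) fun h => hfresh ⟨l, hl, hlj, h ▸ hwk⟩
    rcases (hw.apply_ne_zero (i := j) (by omega)).lt_or_gt with hneg | hpos
    · have := neg_apply_le_negCount hw h12 h21 hj hjn hneg
      exact h31b2 ⟨l, j, k, hl, hlj, hjk, hkn, hneg, by omega, hkl, by omega⟩
    · exact h312 ⟨l, j, k, hl, hlj, hjk, hkn, hpos, by omega, hkl⟩
  · have := neg_apply_le_negCount hw h12 h21 hk hkn (by omega)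
    omega

lemma le_apply_of_mem_qtowCandidates (hw : IsBn n w) (h5 : AvoidsFive n w) {j : ℤ}
    (hj : 1 ≤ j) (hjn : j ≤ n) {x : ℤ} (hx : x ∈ qtowCandidates n w j) : x ≤ w j := by
  obtain ⟨⟨i, hi, him, rfl⟩, hfresh⟩ := hx
  rcases le_or_gt i (negCount n w) with hip | hpi
  · rw [aFun_of_le hip] at hfresh ⊢
    exact neg_le_apply_of_fresh hw h5.1 h5.2.1 h5.2.2.1 hj hi hip hfresh
  · rw [aFun_of_lt hpi] at hfresh ⊢
    exact le_apply_of_fresh hw h5 hj hjn hpi him hfresh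

end SignedPatterns

theorem stmt_6_general (n : ℕ) (w : Equiv.Perm ℤ) (hw : IsBn n w)
    (h5 : AvoidsFive n w) :
    ∀ j : ℤ, 1 ≤ j → j ≤ (n : ℤ) →
      IsGreatest
        {x : ℤ | (∃ i : ℤ, 1 ≤ i ∧ i ≤ mval n w j ∧ aFun (negCount n w) i = x) ∧
          ¬ ∃ i : ℤ, 1 ≤ i ∧ i < j ∧ w i = x}
        (w j) := fun _ hj hjn =>
  ⟨apply_mem_qtowCandidates hw h5.1 h5.2.1 hj hjn,
    fun _ hx => le_apply_of_mem_qtowCandidates hw h5 hj hjn hx⟩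

/-- Algorithm qtow inverts Algorithm wtoq: if the window of `w ∈ B_n`
avoids the five signed patterns, then for every `1 ≤ j ≤ n`, the entry `w j` is the
maximum of `{a_1, …, a_{m_j}} \ {w_1, …, w_{j-1}}`. -/
theorem stmt_6 (n : ℕ) (hn : 1 ≤ n) (w : Equiv.Perm ℤ) (hw : IsBn n w)
    (h5 : AvoidsFive n w) :
    ∀ j : ℤ, 1 ≤ j → j ≤ (n : ℤ) →
      IsGreatest
        {x : ℤ | (∃ i : ℤ, 1 ≤ i ∧ i ≤ mval n w j ∧ aFun (negCount n w) i = x) ∧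
          ¬ ∃ i : ℤ, 1 ≤ i ∧ i < j ∧ w i = x}
        (w j) :=
  stmt_6_general n w hw h5
end

section
/- Let w ∈ B_n have window avoiding the five signed patterns 1 2̄, 2̄ 1, 2̄ 1̄, 3 1 2, 3 1̄ 2, and suppose p = #{j : w_j < 0} ≥ 1, so the negative window values are exactly −1,…,−p. Then the sequence (p, p−1, …, 2, 1, w_1, w_2, …, w_n) of p + n distinct nonzero integers avoids the pattern 312; that is, there are no three positions i < j < k in this sequence whose entries u_i, u_j, u_k satisfy u_j < u_k < u_i. -/
open scoped BigOperators

/-!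
A positive window letter `w k` exceeds `p`: otherwise, by `1 2̄` and `2̄ 1`, the absolute values
of the `p` negative letters would be distinct elements of `{1, …, w k - 1}`.

A `312` in `(p, …, 1, w 1, …, w n)` cannot lie in the decreasing prefix, nor in the window, by
the signed patterns and `w (-i) = -w i`. Otherwise its `3` is a prefix letter, at most `p`, and
its `2` is a window letter exceeding an earlier letter, hence positive (by `2̄ 1̄` when that
letter is in the window), hence larger than `p`.
-/

section OddPerm

variable {n : ℕ} {w : Equiv.Perm ℤ}

theorem apply_ne_zero_of_odd (hodd : ∀ i, w (-i) = -w i) {i : ℤ} (hi : i ≠ 0) : w i ≠ 0 := by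
  have hw0 : w 0 = 0 := by have := hodd 0; rw [neg_zero] at this; omega
  rw [← hw0]
  exact w.injective.ne hi

theorem negCount_lt_of_pos (hodd : ∀ i, w (-i) = -w i) (h12 : Avoids12bar n w)
    (h21 : Avoids2bar1 n w) {k : ℤ} (hk : 1 ≤ k) (hkn : k ≤ n) (hpos : 0 < w k) :
    (negCount n w : ℤ) < w k := by
  by_contra! hle
  have hmaps : Set.MapsTo (fun i => -w i)
      ((Finset.Icc 1 (n : ℤ)).filter (fun i => w i < 0)) (Finset.Ico 1 (w k)) := by
    intro i hi
    simp only [Finset.coe_filter, Finset.mem_Icc, Set.mem_ofPred_eq] at hi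
    obtain ⟨⟨hi1, hin⟩, hneg⟩ := hi
    have hne : w i ≠ -w k := by
      rw [← hodd]
      exact fun h => by have := w.injective h; omega
    have hbelow : ¬ w k < -w i := fun habove => by
      rcases lt_trichotomy i k with hik | rfl | hki
      · exact h21 ⟨i, k, hi1, hik, hkn, hneg, hpos, habove⟩
      · omega
      · exact h12 ⟨k, i, hk, hki, hin, hpos, hneg, habove⟩
    simp only [Finset.coe_Ico, Set.mem_Ico]
    omega
  have hcard := Finset.card_le_card_of_injOn _ hmaps
    (fun a _ b _ hab => w.injective (neg_injective hab))
  rw [Int.card_Ico] at hcard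
  unfold negCount at hle
  omega

theorem negCount_lt_of_lt (hodd : ∀ i, w (-i) = -w i) (h12 : Avoids12bar n w)
    (h21 : Avoids2bar1 n w) (h21bar : Avoids2bar1bar n w) {j k : ℤ} (hj : 1 ≤ j) (hjk : j < k)
    (hkn : k ≤ n) (hlt : w j < w k) : (negCount n w : ℤ) < w k := by
  rcases lt_trichotomy (w k) 0 with hneg | hzero | hpos
  · exact (h21bar ⟨j, k, hj, hjk, hkn, hlt, hneg⟩).elim
  · exact (apply_ne_zero_of_odd hodd (by omega) hzero).elim
  · exact negCount_lt_of_pos hodd h12 h21 (by omega) hkn hpos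

theorem window_avoids312 (hodd : ∀ i, w (-i) = -w i) (h21 : Avoids2bar1 n w)
    (h21bar : Avoids2bar1bar n w) (h312 : Avoids312s n w) (h31bar2 : Avoids31bar2 n w) :
    ¬ ∃ i j k : ℤ, 1 ≤ i ∧ i < j ∧ j < k ∧ k ≤ n ∧ w j < w k ∧ w k < w i := by
  rintro ⟨i, j, k, hi, hij, hjk, hkn, hjk', hki⟩
  have hj0 := apply_ne_zero_of_odd hodd (i := j) (by omega)
  have hk0 := apply_ne_zero_of_odd hodd (i := k) (by omega)
  rcases lt_or_gt_of_ne hj0 with hj | hj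
  · rcases lt_or_gt_of_ne hk0 with hk | hk
    · exact h21bar ⟨j, k, by omega, hjk, hkn, hjk', hk⟩
    · rcases lt_trichotomy (w k) (-w j) with hlt | heq | hgt
      · exact h21 ⟨j, k, by omega, hjk, hkn, hj, hk, hlt⟩
      · rw [← hodd] at heq
        have := w.injective heq
        omega
      · exact h31bar2 ⟨i, j, k, hi, hij, hjk, hkn, hj, hk, hki, hgt⟩
  · exact h312 ⟨i, j, k, hi, hij, hjk, hkn, hj, hjk', hki⟩

end OddPerm

theorem stmt_7_general (n : ℕ) (w : Equiv.Perm ℤ) (hw : IsBn n w)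
    (h5 : AvoidsFive n w)
    (u : ℤ → ℤ)
    (hu : ∀ i : ℤ, u i =
      if i ≤ (negCount n w : ℤ) then (negCount n w : ℤ) + 1 - i
      else w (i - (negCount n w : ℤ))) :
    ¬ ∃ i j k : ℤ, 1 ≤ i ∧ i < j ∧ j < k ∧ k ≤ (negCount n w : ℤ) + (n : ℤ) ∧
      u j < u k ∧ u k < u i := by
  obtain ⟨h12, h21, h21bar, h312, h31bar2⟩ := h5
  set p : ℤ := (negCount n w : ℤ)
  have hprefix : ∀ x ≤ p, u x = p + 1 - x := fun x hx => by rw [hu, if_pos hx]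
  have hwindow : ∀ x, p < x → u x = w (x - p) := fun x hx => by rw [hu, if_neg hx.not_ge]
  rintro ⟨i, j, k, hi, hij, hjk, hkn, hjk', hki⟩
  by_cases hkp : k ≤ p
  · rw [hprefix j (by omega), hprefix k hkp] at hjk'
    omega
  rw [hwindow k (by omega)] at hjk' hki
  by_cases hip : p < i
  · rw [hwindow i hip] at hki
    rw [hwindow j (by omega)] at hjk'
    exact window_avoids312 hw.1 h21 h21bar h312 h31bar2
      ⟨i - p, j - p, k - p, by omega, by omega, by omega, by omega, hjk', hki⟩
  rw [hprefix i (by omega)] at hki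
  by_cases hjp : p < j
  · rw [hwindow j hjp] at hjk'
    have := negCount_lt_of_lt hw.1 h12 h21 h21bar (j := j - p) (k := k - p) (by omega) (by omega)
      (by omega) hjk'
    omega
  · rw [hprefix j (by omega)] at hjk'
    have := negCount_lt_of_pos hw.1 h12 h21 (k := k - p) (by omega) (by omega) (by omega)
    omega

/-- If the window of `w ∈ B_n` avoids the five signed patterns and the
window contains `p ≥ 1` negative letters, then the sequence
`(p, p-1, …, 1, w 1, …, w n)` avoids the pattern `312`. -/
theorem stmt_7 (n : ℕ) (hn : 1 ≤ n) (w : Equiv.Perm ℤ) (hw : IsBn n w)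
    (h5 : AvoidsFive n w) (hp : 1 ≤ negCount n w)
    (u : ℤ → ℤ)
    (hu : ∀ i : ℤ, u i =
      if i ≤ (negCount n w : ℤ) then (negCount n w : ℤ) + 1 - i
      else w (i - (negCount n w : ℤ))) :
    ¬ ∃ i j k : ℤ, 1 ≤ i ∧ i < j ∧ j < k ∧ k ≤ (negCount n w : ℤ) + (n : ℤ) ∧
      u j < u k ∧ u k < u i :=
  stmt_7_general n w hw h5 u hu
end
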